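/- For every positive integer p and every real h, (p−1) · (d/dh) κ_p(h) = τ_p(h), where κ_p(h) = 1 − (2^{−C(p,2)}/Π_{j=0}^{p−1} j!) det_{0≤i,j<p}( (−1)^i H_{i+j}(0) − H_{i+j}(h) e^{−h²} ) and τ_p(h) = (p−1)(2^{−C(p,2)}/Π_{j=0}^{p−1} j!) det_{0≤i,j<p}(A_{i,j}) with A_{i,j} = (−1)^i H_{i+j}(0) − H_{i+j}(h) e^{−h²} for i < p−1 and A_{p−1,j} = (−1)^p H_{p+j}(0) − H_{p+j}(h) e^{−h²}. -/

import Mathlib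

open scoped BigOperators

/-- The `k`-th physicists' Hermite polynomial, via
`H_k(z)/k! = Σ_m ((-1)^(k-m)/(k-m)!) (2z)^(2m-k)/(2m-k)!` (terms with negative
factorial arguments being zero). -/
noncomputable def hermiteH (k : ℕ) (z : ℝ) : ℝ :=
  (k.factorial : ℝ) * ∑ m ∈ Finset.range (k+1),
    if k ≤ 2*m then ((-1:ℝ)^(k-m) / (k-m).factorial) * ((2*z)^(2*m-k) / (2*m-k).factorial)
    else 0

/-- `κ_p(h) = 1 − (2^{-C(p,2)}/Π_{j<p} j!) det_{0≤i,j<p}( (-1)^i H_{i+j}(0) − H_{i+j}(h)e^{-h²} )`. -/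
noncomputable def kappa (p : ℕ) (h : ℝ) : ℝ :=
  1 - (((2:ℝ)^(p.choose 2))⁻¹ / ∏ j ∈ Finset.range p, (j.factorial : ℝ)) *
    Matrix.det (Matrix.of fun i j : Fin p =>
      (-1:ℝ)^(i : ℕ) * hermiteH ((i : ℕ)+(j : ℕ)) 0
        - hermiteH ((i : ℕ)+(j : ℕ)) h * Real.exp (-h^2))

/-- `τ_p(h)`: as `κ_p`, but with the last row of the determinant replaced as in the paper,
and an extra factor `p − 1`. -/
noncomputable def tau (p : ℕ) (h : ℝ) : ℝ :=
  ((p : ℝ) - 1) * (((2:ℝ)^(p.choose 2))⁻¹ / ∏ j ∈ Finset.range p, (j.factorial : ℝ)) *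
    Matrix.det (Matrix.of fun i j : Fin p =>
      if (i : ℕ) < p - 1 then
        (-1:ℝ)^(i : ℕ) * hermiteH ((i : ℕ)+(j : ℕ)) 0
          - hermiteH ((i : ℕ)+(j : ℕ)) h * Real.exp (-h^2)
      else
        (-1:ℝ)^p * hermiteH (p+(j : ℕ)) 0 - hermiteH (p+(j : ℕ)) h * Real.exp (-h^2))

/-!
Since `(H_k(t) e^{-t²})' = -H_{k+1}(t) e^{-t²}`, row `i` of the derivative of the matrix in `κ_p`
is the constant row `(-1)^{i+1} H_{i+1+j}(0)` minus row `i + 1` of the same pattern. By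
multilinearity, the derivative of the determinant splits into two sums. In the first, every
shifted row except the last duplicates the next row, which leaves minus the determinant in `τ_p`.
The second is the derivative at `x = 0` of `det((-1)^i H_{i+j}(x) e^{-x²} - H_{i+j}(h) e^{-h²})`,
which vanishes: `H_k` has the parity of `k`, so this matrix at `-x` is the transpose of the one
at `x`, and its determinant is even.
-/

open Finset Matrix Nat

noncomputable def hermiteTerm (k m : ℕ) (z : ℝ) : ℝ :=
  if k ≤ 2 * m then
    (k ! : ℝ) * ((-1) ^ (k - m) / (k - m)!) * ((2 * z) ^ (2 * m - k) / (2 * m - k)!)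
  else 0

lemma hermiteH_eq_sum_hermiteTerm (k : ℕ) (z : ℝ) :
    hermiteH k z = ∑ m ∈ range (k + 1), hermiteTerm k m z := by
  rw [hermiteH, mul_sum]
  refine sum_congr rfl fun m _ => ?_
  unfold hermiteTerm
  split_ifs <;> ring

lemma hermiteTerm_of_lt {k m : ℕ} (h : 2 * m < k) (z : ℝ) : hermiteTerm k m z = 0 :=
  if_neg (by omega)

lemma hermiteTerm_eq {k m a b : ℕ} (hk : k = 2 * a + b) (hm : m = a + b) (z : ℝ) :
    hermiteTerm k m z = (-1 : ℝ) ^ a * k ! / (a ! * b !) * (2 * z) ^ b := by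
  rw [hermiteTerm, if_pos (by omega), show k - m = a by omega, show 2 * m - k = b by omega]
  ring

lemma hasDerivAt_hermiteTerm_succ {k m : ℕ} (hm : m ≤ k) (z : ℝ) :
    HasDerivAt (hermiteTerm (k + 1) (m + 1)) (2 * (k + 1) * hermiteTerm k m z) z := by
  rcases le_or_gt k (2 * m) with hk | hk
  · have e : hermiteTerm (k + 1) (m + 1) = fun w =>
        (-1 : ℝ) ^ (k - m) * (k + 1)! / ((k - m)! * (2 * m - k + 1)!) * (2 * w) ^ (2 * m - k + 1) :=
      funext <| hermiteTerm_eq (by omega) (by omega)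
    rw [e, hermiteTerm_eq (a := k - m) (b := 2 * m - k) (by omega) (by omega)]
    refine ((((hasDerivAt_id' z).const_mul 2).pow _).const_mul _).congr_deriv ?_
    push_cast [factorial_succ]
    field_simp
  · have e : hermiteTerm (k + 1) (m + 1) = fun _ => hermiteTerm (k + 1) (m + 1) 0 := by
      funext w
      unfold hermiteTerm
      split_ifs
      · rw [show 2 * (m + 1) - (k + 1) = 0 by omega, pow_zero, pow_zero]
      · rfl
    rw [e, hermiteTerm_of_lt hk, mul_zero]
    exact hasDerivAt_const _ _

lemma hermiteTerm_add_two {k m : ℕ} (hm : m ≤ k) (z : ℝ) :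
    hermiteTerm (k + 2) (m + 1) z =
      2 * z * hermiteTerm (k + 1) m z - 2 * (k + 1) * hermiteTerm k m z := by
  rcases lt_trichotomy k (2 * m) with hk | rfl | hk
  · rw [hermiteTerm_eq (a := k - m + 1) (b := 2 * m - k) (by omega) (by omega),
      hermiteTerm_eq (a := k - m + 1) (b := 2 * m - k - 1) (by omega) (by omega),
      hermiteTerm_eq (a := k - m) (b := 2 * m - k) (by omega) (by omega),
      show 2 * m - k = 2 * m - k - 1 + 1 by omega]
    have hk' : (k : ℝ) = 2 * (k - m : ℕ) + (2 * m - k - 1 : ℕ) + 1 := by norm_cast; omega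
    push_cast [factorial_succ, pow_succ]
    field_simp
    rw [hk']
    ring
  · rw [hermiteTerm_eq (a := m + 1) (b := 0) (by omega) (by omega), hermiteTerm_of_lt (by omega),
      hermiteTerm_eq (a := m) (b := 0) (by omega) (by omega)]
    push_cast [factorial_succ, pow_succ]
    field_simp
    ring
  · rw [hermiteTerm_of_lt (by omega), hermiteTerm_of_lt (by omega), hermiteTerm_of_lt hk]
    ring

lemma hermiteTerm_succ_self (k : ℕ) (z : ℝ) :
    hermiteTerm (k + 1) (k + 1) z = 2 * z * hermiteTerm k k z := by
  rw [hermiteTerm_eq (a := 0) (b := k + 1) (by omega) (by omega),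
    hermiteTerm_eq (a := 0) (b := k) (by omega) (by omega)]
  push_cast [factorial_succ, pow_succ]
  field_simp

lemma hermiteH_zero (z : ℝ) : hermiteH 0 z = 1 := by simp [hermiteH]

lemma hermiteH_one (z : ℝ) : hermiteH 1 z = 2 * z := by simp [hermiteH, sum_range_succ]

lemma hermiteH_add_two (k : ℕ) (z : ℝ) :
    hermiteH (k + 2) z = 2 * z * hermiteH (k + 1) z - 2 * (k + 1) * hermiteH k z := by
  simp only [hermiteH_eq_sum_hermiteTerm]
  rw [sum_range_succ' _ (k + 2), hermiteTerm_of_lt (by omega), add_zero, sum_range_succ,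
    sum_congr rfl fun m hm => hermiteTerm_add_two (mem_range_succ_iff.1 hm) z,
    hermiteTerm_succ_self, sum_range_succ _ (k + 1), sum_sub_distrib, ← mul_sum, ← mul_sum]
  ring

lemma hasDerivAt_hermiteH_succ (k : ℕ) (z : ℝ) :
    HasDerivAt (hermiteH (k + 1)) (2 * (k + 1) * hermiteH k z) z := by
  have e : hermiteH (k + 1) = fun w => ∑ m ∈ range (k + 1), hermiteTerm (k + 1) (m + 1) w := by
    funext w
    rw [hermiteH_eq_sum_hermiteTerm, sum_range_succ', hermiteTerm_of_lt (by omega), add_zero]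
  rw [e, hermiteH_eq_sum_hermiteTerm, mul_sum]
  exact HasDerivAt.fun_sum fun m hm => hasDerivAt_hermiteTerm_succ (mem_range_succ_iff.1 hm) z

lemma hasDerivAt_hermiteH (k : ℕ) (z : ℝ) :
    HasDerivAt (hermiteH k) (2 * z * hermiteH k z - hermiteH (k + 1) z) z := by
  cases k with
  | zero =>
    rw [show hermiteH 0 = fun _ => 1 from funext hermiteH_zero, hermiteH_one]
    simpa using hasDerivAt_const z (1 : ℝ)
  | succ k =>
    refine (hasDerivAt_hermiteH_succ k z).congr_deriv ?_
    rw [hermiteH_add_two]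
    ring

lemma hermiteH_neg (k : ℕ) (z : ℝ) : hermiteH k (-z) = (-1) ^ k * hermiteH k z := by
  simp only [hermiteH_eq_sum_hermiteTerm, mul_sum]
  refine sum_congr rfl fun m hm => ?_
  rcases le_or_gt k (2 * m) with hk | hk
  · obtain ⟨a, b, rfl, rfl⟩ : ∃ a b, k = 2 * a + b ∧ m = a + b :=
      have := mem_range_succ_iff.1 hm
      ⟨k - m, 2 * m - k, by omega, by omega⟩
    rw [hermiteTerm_eq rfl rfl, hermiteTerm_eq rfl rfl, pow_add, pow_mul, neg_one_sq, one_pow,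
      show 2 * -z = -1 * (2 * z) by ring, mul_pow]
    ring
  · rw [hermiteTerm_of_lt hk, hermiteTerm_of_lt hk, mul_zero]

lemma hasDerivAt_det {𝕜 ι : Type*} [NontriviallyNormedField 𝕜] [Fintype ι] [DecidableEq ι]
    {A : 𝕜 → Matrix ι ι 𝕜} {A' : Matrix ι ι 𝕜} {x : 𝕜}
    (hA : ∀ i j, HasDerivAt (fun t => A t i j) (A' i j) x) :
    HasDerivAt (fun t => (A t).det) (∑ i, ((A x).updateRow i (A' i)).det) x := by
  let D : ContinuousMultilinearMap 𝕜 (fun _ : ι => ι → 𝕜) 𝕜 :=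
    { (detRowAlternating : (ι → 𝕜) [⋀^ι]→ₗ[𝕜] 𝕜).toMultilinearMap with
      cont := continuous_id.matrix_det }
  have hrows : HasDerivAt A A' x := hasDerivAt_pi.2 fun i => hasDerivAt_pi.2 (hA i)
  exact ((D.hasFDerivAt (A x)).comp_hasDerivAt x hrows).congr_deriv (D.linearDeriv_apply _ _)

lemma Function.Even.eq_zero_of_hasDerivAt_zero {𝕜 F : Type*} [NontriviallyNormedField 𝕜]
    [NormedAddCommGroup F] [NormedSpace 𝕜 F] [IsAddTorsionFree F] {f : 𝕜 → F} {f' : F}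
    (hf : f.Even) (hd : HasDerivAt f f' 0) : f' = 0 := by
  have hneg : HasDerivAt f (-f') 0 := by
    have := (neg_zero (G := 𝕜) ▸ hd).scomp (0 : 𝕜) (hasDerivAt_neg' 0)
    rw [show (f ∘ fun x => -x) = f from funext hf] at this
    simpa using this
  exact self_eq_neg.1 (hd.unique hneg)

lemma sum_det_updateRow_succ {R : Type*} [CommRing R] {n : ℕ} (r : ℕ → Fin (n + 1) → R) :
    ∑ i : Fin (n + 1), ((of fun i : Fin (n + 1) => r i).updateRow i (r (i + 1))).det =
      ((of fun i : Fin (n + 1) => r i).updateRow (Fin.last n) (r (n + 1))).det := by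
  rw [Fin.sum_univ_castSucc, sum_eq_zero, zero_add, Fin.val_last]
  intro i _
  refine det_zero_of_row_eq (i := i.castSucc) (j := i.succ) (Fin.castSucc_lt_succ).ne ?_
  rw [updateRow_self, updateRow_ne (Fin.castSucc_lt_succ).ne']
  rfl

lemma det_updateRow_sub {ι R : Type*} [DecidableEq ι] [Fintype ι] [CommRing R] (M : Matrix ι ι R)
    (i : ι) (u v : ι → R) :
    (M.updateRow i (u - v)).det = (M.updateRow i u).det - (M.updateRow i v).det := by
  rw [sub_eq_add_neg, det_updateRow_add, ← neg_one_smul R v, det_updateRow_smul]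
  ring

noncomputable def hermiteMulGaussian (k : ℕ) (x : ℝ) : ℝ := hermiteH k x * Real.exp (-x ^ 2)

lemma hermiteMulGaussian_zero (k : ℕ) : hermiteMulGaussian k 0 = hermiteH k 0 := by
  simp [hermiteMulGaussian]

lemma hermiteMulGaussian_neg (k : ℕ) (x : ℝ) :
    hermiteMulGaussian k (-x) = (-1) ^ k * hermiteMulGaussian k x := by
  rw [hermiteMulGaussian, hermiteMulGaussian, hermiteH_neg, neg_sq, mul_assoc]

lemma hasDerivAt_hermiteMulGaussian (k : ℕ) (x : ℝ) :
    HasDerivAt (hermiteMulGaussian k) (-hermiteMulGaussian (k + 1) x) x := by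
  have hexp : HasDerivAt (fun t : ℝ => Real.exp (-t ^ 2)) (Real.exp (-x ^ 2) * -(2 * x)) x := by
    simpa using ((hasDerivAt_pow 2 x).neg).exp
  refine ((hasDerivAt_hermiteH k x).mul hexp).congr_deriv ?_
  rw [hermiteMulGaussian]
  ring

noncomputable def kappaEntry (h : ℝ) (i j : ℕ) : ℝ :=
  (-1) ^ i * hermiteH (i + j) 0 - hermiteMulGaussian (i + j) h

noncomputable def kappaMatrix (p : ℕ) (h : ℝ) : Matrix (Fin p) (Fin p) ℝ :=
  of fun i j => kappaEntry h i j

noncomputable def kappaScale (p : ℕ) : ℝ :=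
  ((2 : ℝ) ^ p.choose 2)⁻¹ / ∏ j ∈ range p, (j ! : ℝ)

noncomputable def tauMatrix (n : ℕ) (h : ℝ) : Matrix (Fin (n + 1)) (Fin (n + 1)) ℝ :=
  (kappaMatrix (n + 1) h).updateRow (Fin.last n) fun j => kappaEntry h (n + 1) j

lemma kappa_eq (p : ℕ) (h : ℝ) : kappa p h = 1 - kappaScale p * (kappaMatrix p h).det := rfl

lemma tau_succ (n : ℕ) (h : ℝ) :
    tau (n + 1) h = n * kappaScale (n + 1) * (tauMatrix n h).det := by
  rw [tau, tauMatrix, Nat.cast_succ, add_sub_cancel_right]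
  congr 2
  ext i j
  rcases eq_or_ne i (Fin.last n) with rfl | hi
  · simp [kappaEntry, hermiteMulGaussian]
  · simp [updateRow_ne hi, Fin.val_lt_last hi, kappaMatrix, kappaEntry, hermiteMulGaussian]

lemma hasDerivAt_kappaEntry (h : ℝ) (i j : ℕ) :
    HasDerivAt (fun t => kappaEntry t i j)
      ((-1) ^ (i + 1) * hermiteH (i + 1 + j) 0 - kappaEntry h (i + 1) j) h := by
  refine ((hasDerivAt_hermiteMulGaussian (i + j) h).const_sub _).congr_deriv ?_
  rw [kappaEntry, show i + 1 + j = i + j + 1 by omega]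
  ring

lemma sum_det_kappaMatrix_updateRow_hermiteH_zero (n : ℕ) (h : ℝ) :
    ∑ i : Fin n, ((kappaMatrix n h).updateRow i
      fun j => (-1) ^ ((i : ℕ) + 1) * hermiteH (i + 1 + j) 0).det = 0 := by
  let C : ℝ → Matrix (Fin n) (Fin n) ℝ := fun x => of fun i j =>
    (-1) ^ (i : ℕ) * hermiteMulGaussian (i + j) x - hermiteMulGaussian (i + j) h
  have hC0 : C 0 = kappaMatrix n h := by
    ext i j
    simp [C, kappaMatrix, kappaEntry, hermiteMulGaussian_zero]
  have hC' : ∀ i j : Fin n, HasDerivAt (fun x => C x i j)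
      ((-1) ^ ((i : ℕ) + 1) * hermiteH (i + 1 + j) 0) 0 := fun i j => by
    refine (((hasDerivAt_hermiteMulGaussian (i + j) 0).const_mul _).sub_const _).congr_deriv ?_
    rw [hermiteMulGaussian_zero, show (i : ℕ) + j + 1 = i + 1 + j by omega, pow_succ]
    ring
  have heven : Function.Even fun x => (C x).det := fun x => by
    show (C (-x)).det = (C x).det
    rw [← det_transpose (C x)]
    congr 1
    ext i j
    simp only [C, transpose_apply, of_apply, hermiteMulGaussian_neg, add_comm (j : ℕ)]
    rw [← mul_assoc, ← pow_add, ← add_assoc, ← two_mul, pow_add, pow_mul, neg_one_sq, one_pow,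
      one_mul]
  simpa [hC0] using heven.eq_zero_of_hasDerivAt_zero (hasDerivAt_det hC')

lemma hasDerivAt_det_kappaMatrix (n : ℕ) (h : ℝ) :
    HasDerivAt (fun t => (kappaMatrix (n + 1) t).det)
      (-(tauMatrix n h).det) h := by
  refine (hasDerivAt_det (A := kappaMatrix (n + 1)) fun i j =>
    hasDerivAt_kappaEntry h i j).congr_deriv ?_
  have hrow : ∀ i : Fin (n + 1), ((kappaMatrix (n + 1) h).updateRow i fun j =>
      (-1) ^ ((i : ℕ) + 1) * hermiteH (i + 1 + j) 0 - kappaEntry h (i + 1) j).det =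
      ((kappaMatrix (n + 1) h).updateRow i fun j =>
        (-1) ^ ((i : ℕ) + 1) * hermiteH (i + 1 + j) 0).det -
      ((kappaMatrix (n + 1) h).updateRow i fun j => kappaEntry h (i + 1) j).det :=
    fun i => det_updateRow_sub _ _ _ _
  rw [sum_congr rfl fun i _ => hrow i, sum_sub_distrib,
    sum_det_kappaMatrix_updateRow_hermiteH_zero, zero_sub]
  exact congrArg Neg.neg (sum_det_updateRow_succ fun i (j : Fin (n + 1)) => kappaEntry h i j)

/-- `(p−1) · (d/dh) κ_p(h) = τ_p(h)`. -/
theorem stmt10 (p : ℕ) (hp : 0 < p) (h : ℝ) :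
    ∃ d : ℝ, HasDerivAt (kappa p) d h ∧ ((p : ℝ) - 1) * d = tau p h := by
  obtain ⟨n, rfl⟩ := Nat.exists_eq_add_one_of_ne_zero hp.ne'
  refine ⟨kappaScale (n + 1) * (tauMatrix n h).det, ?_, ?_⟩
  · rw [show kappa (n + 1) = _ from funext (kappa_eq (n + 1))]
    simpa using ((hasDerivAt_det_kappaMatrix n h).const_mul (kappaScale (n + 1))).const_sub 1
  · rw [tau_succ]
    push_cast
    ring
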